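/- With independent components per worker, E[‖(1/N)∑ₙ cₙ(1ₙ ⊙ yₙ)‖²] = (1/N²)∑ₙ (cₙ − 1)‖yₙ‖² + ‖g‖², where g = (1/N)∑ₙ yₙ. -/

import Mathlib

open MeasureTheory ProbabilityTheory Finset

/-- Coordinatewise (Hadamard) product on `ℝ^d`. -/
noncomputable def hadamard {d : ℕ} (a b : EuclideanSpace ℝ (Fin d)) :
    EuclideanSpace ℝ (Fin d) := WithLp.toLp 2 (fun i => a i * b i)

/-!
Work coordinatewise. The rescaled mask `cₙ 1ₙ[i]` has mean `1` and variance `cₙ - 1`, and the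
masks of different workers are independent, so the variance of `∑ₙ cₙ 1ₙ[i] yₙ[i]` is
`∑ₙ (cₙ - 1) yₙ[i]²` while its mean is `∑ₙ yₙ[i]`. Its second moment is variance plus squared
mean; summing over the coordinates `i` gives the formula.
-/

lemma hadamard_apply {d : ℕ} (a b : EuclideanSpace ℝ (Fin d)) (i : Fin d) :
    hadamard a b i = a i * b i := rfl

lemma EuclideanSpace.norm_smul_sq_eq_sum {ι : Type*} [Fintype ι] (a : ℝ)
    (x : EuclideanSpace ℝ ι) : ‖a • x‖ ^ 2 = a ^ 2 * ∑ i, x i ^ 2 := by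
  rw [norm_smul, mul_pow, Real.norm_eq_abs, sq_abs, EuclideanSpace.real_norm_sq_eq]

section ZeroOne

variable {Ω : Type*} [MeasurableSpace Ω] {μ : Measure Ω} {b : Ω → ℝ}

lemma memLp_of_eq_zero_or_eq_one [IsFiniteMeasure μ] (hbm : Measurable b)
    (hb : ∀ ω, b ω = 0 ∨ b ω = 1) (p : ENNReal) : MemLp b p μ :=
  MemLp.of_bound hbm.aestronglyMeasurable 1
    (ae_of_all _ fun ω => by rcases hb ω with h | h <;> simp [h])

lemma integral_of_eq_zero_or_eq_one (hbm : Measurable b) (hb : ∀ ω, b ω = 0 ∨ b ω = 1) :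
    ∫ ω, b ω ∂μ = μ.real {ω | b ω = 1} := by
  have hind : b = {ω | b ω = 1}.indicator 1 := by
    funext ω
    rcases hb ω with h | h <;> simp [h]
  calc ∫ ω, b ω ∂μ = ∫ ω, {ω | b ω = 1}.indicator 1 ω ∂μ := by rw [← hind]
    _ = μ.real {ω | b ω = 1} := integral_indicator_one (hbm (measurableSet_singleton 1))

lemma variance_of_eq_zero_or_eq_one [IsProbabilityMeasure μ] (hbm : Measurable b)
    (hb : ∀ ω, b ω = 0 ∨ b ω = 1) :
    variance b μ = μ.real {ω | b ω = 1} * (1 - μ.real {ω | b ω = 1}) := by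
  have hsq : b ^ 2 = b := by
    funext ω
    rcases hb ω with h | h <;> simp [h]
  rw [variance_eq_sub (memLp_of_eq_zero_or_eq_one hbm hb 2), hsq,
    integral_of_eq_zero_or_eq_one hbm hb]
  ring

end ZeroOne

section SecondMoment

variable {Ω : Type*} [MeasurableSpace Ω] {μ : Measure Ω} [IsProbabilityMeasure μ] {ι : Type*}

lemma integral_sum_sq_of_pairwise_indepFun {s : Finset ι} {X : ι → Ω → ℝ}
    (hX : ∀ i ∈ s, MemLp (X i) 2 μ)
    (hindep : Set.Pairwise ↑s fun i j => IndepFun (X i) (X j) μ) :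
    ∫ ω, (∑ i ∈ s, X i ω) ^ 2 ∂μ
      = ∑ i ∈ s, variance (X i) μ + (∑ i ∈ s, ∫ ω, X i ω ∂μ) ^ 2 := by
  rw [← IndepFun.variance_sum hX hindep, variance_eq_sub (memLp_finsetSum' s hX),
    ← integral_finsetSum s fun i hi => (hX i hi).integrable one_le_two]
  simp only [Finset.sum_apply, Pi.pow_apply]
  ring

lemma integral_sq_sum_of_unbiased_masks [Fintype ι] {b : ι → Ω → ℝ} {c : ι → ℝ}
    (hc : ∀ n, 1 ≤ c n) (hbm : ∀ n, Measurable (b n)) (hb : ∀ n ω, b n ω = 0 ∨ b n ω = 1)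
    (hprob : ∀ n, μ {ω | b n ω = 1} = ENNReal.ofReal (c n)⁻¹)
    (hindep : Pairwise fun n m => IndepFun (b n) (b m) μ) (a : ι → ℝ) :
    ∫ ω, (∑ n, c n * a n * b n ω) ^ 2 ∂μ = ∑ n, (c n - 1) * a n ^ 2 + (∑ n, a n) ^ 2 := by
  have hc0 (n : ι) : c n ≠ 0 := by linarith [hc n]
  have hreal (n : ι) : μ.real {ω | b n ω = 1} = (c n)⁻¹ := by
    rw [measureReal_def, hprob, ENNReal.toReal_ofReal (inv_nonneg.mpr (by linarith [hc n]))]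
  rw [integral_sum_sq_of_pairwise_indepFun (X := fun n ω => c n * a n * b n ω)
    (fun n _ => (memLp_of_eq_zero_or_eq_one (hbm n) (hb n) 2).const_mul _)
    (fun n _ m _ hnm => (hindep hnm).comp (measurable_const_mul _) (measurable_const_mul _))]
  congr 1
  · refine Finset.sum_congr rfl fun n _ => ?_
    rw [variance_const_mul, variance_of_eq_zero_or_eq_one (hbm n) (hb n), hreal]
    field_simp [hc0 n]
  · congr 1
    refine Finset.sum_congr rfl fun n _ => ?_
    rw [integral_const_mul, integral_of_eq_zero_or_eq_one (hbm n) (hb n), hreal]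
    field_simp [hc0 n]

end SecondMoment

theorem masked_gradient_second_moment_general
    {Ω : Type*} [MeasurableSpace Ω] (μ : Measure Ω) [IsProbabilityMeasure μ]
    (N d : ℕ)
    (y : Fin N → EuclideanSpace ℝ (Fin d))
    (B : Fin N → Ω → EuclideanSpace ℝ (Fin d))
    (c : Fin N → ℝ) (hc : ∀ n, 1 ≤ c n)
    (hBmeas : ∀ n, Measurable (B n))
    (hB01 : ∀ n ω i, B n ω i = 0 ∨ B n ω i = 1)
    (hBernoulli : ∀ n i, μ {ω | B n ω i = 1} = ENNReal.ofReal (c n)⁻¹)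
    (hindep : iIndepFun
      (fun p : Fin N × Fin d => fun ω => B p.1 ω p.2) μ)
    (g : EuclideanSpace ℝ (Fin d)) (hg : g = (N : ℝ)⁻¹ • ∑ n, y n) :
    (∫ ω, ‖(N : ℝ)⁻¹ • ∑ n, c n • hadamard (B n ω) (y n)‖ ^ 2 ∂μ)
      = ((N : ℝ) ^ 2)⁻¹ * ∑ n, (c n - 1) * ‖y n‖ ^ 2 + ‖g‖ ^ 2 := by
  have hBm (n : Fin N) (i : Fin d) : Measurable fun ω => B n ω i := by fun_prop
  have hnorm (ω : Ω) : ‖(N : ℝ)⁻¹ • ∑ n, c n • hadamard (B n ω) (y n)‖ ^ 2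
      = ((N : ℝ) ^ 2)⁻¹ * ∑ i, (∑ n, c n * y n i * B n ω i) ^ 2 := by
    rw [EuclideanSpace.norm_smul_sq_eq_sum, inv_pow]
    simp only [WithLp.ofLp_sum, Finset.sum_apply, PiLp.smul_apply, hadamard_apply, smul_eq_mul]
    congr 1
    refine Finset.sum_congr rfl fun i _ => ?_
    congr 1
    exact Finset.sum_congr rfl fun n _ => by ring
  have hg_sq : ‖g‖ ^ 2 = ((N : ℝ) ^ 2)⁻¹ * ∑ i, (∑ n, y n i) ^ 2 := by
    rw [hg, EuclideanSpace.norm_smul_sq_eq_sum, inv_pow]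
    simp only [WithLp.ofLp_sum, Finset.sum_apply]
  have hsq_int (i : Fin d) : Integrable (fun ω => (∑ n, c n * y n i * B n ω i) ^ 2) μ :=
    (memLp_finsetSum _ fun n _ =>
      (memLp_of_eq_zero_or_eq_one (hBm n i) (hB01 n · i) 2).const_mul _).integrable_sq
  have hcoord (i : Fin d) : ∫ ω, (∑ n, c n * y n i * B n ω i) ^ 2 ∂μ
      = ∑ n, (c n - 1) * y n i ^ 2 + (∑ n, y n i) ^ 2 :=
    integral_sq_sum_of_unbiased_masks (b := fun n ω => B n ω i) hc (hBm · i)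
      (fun n ω => hB01 n ω i) (fun n => hBernoulli n i)
      (fun n m hnm => hindep.indepFun (i := (n, i)) (j := (m, i)) (by simpa using hnm)) _
  simp_rw [hnorm]
  rw [integral_const_mul, integral_finsetSum _ fun i _ => hsq_int i]
  simp only [hcoord, hg_sq, Finset.sum_add_distrib, mul_add]
  congr 2
  rw [Finset.sum_comm]
  simp only [EuclideanSpace.real_norm_sq_eq, Finset.mul_sum]

/-- With independent Bernoulli entries `1ₙ[i]` of success probability `1/cₙ`
(`cₙ ≥ 1`), and fixed vectors `yₙ`,
`E[‖(1/N) ∑ₙ cₙ (1ₙ ⊙ yₙ)‖²] = (1/N²) ∑ₙ (cₙ − 1)‖yₙ‖² + ‖g‖²` where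
`g = (1/N) ∑ₙ yₙ`. -/
theorem masked_gradient_second_moment
    {Ω : Type*} [MeasurableSpace Ω] (μ : Measure Ω) [IsProbabilityMeasure μ]
    (N d : ℕ) (hN : 0 < N)
    (y : Fin N → EuclideanSpace ℝ (Fin d))
    (B : Fin N → Ω → EuclideanSpace ℝ (Fin d))
    (c : Fin N → ℝ) (hc : ∀ n, 1 ≤ c n)
    (hBmeas : ∀ n, Measurable (B n))
    (hB01 : ∀ n ω i, B n ω i = 0 ∨ B n ω i = 1)
    (hBernoulli : ∀ n i, μ {ω | B n ω i = 1} = ENNReal.ofReal (c n)⁻¹)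
    (hindep : iIndepFun
      (fun p : Fin N × Fin d => fun ω => B p.1 ω p.2) μ)
    (g : EuclideanSpace ℝ (Fin d)) (hg : g = (N : ℝ)⁻¹ • ∑ n, y n) :
    (∫ ω, ‖(N : ℝ)⁻¹ • ∑ n, c n • hadamard (B n ω) (y n)‖ ^ 2 ∂μ)
      = ((N : ℝ) ^ 2)⁻¹ * ∑ n, (c n - 1) * ‖y n‖ ^ 2 + ‖g‖ ^ 2 :=
  masked_gradient_second_moment_general μ N d y B c hc hBmeas hB01 hBernoulli hindep g hg
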